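/- arXiv:2410.11058 — 2 statements merged into one kernel-verified Lean document; each statement's English description precedes it below -/
import Mathlib

section
/- Let U ⊆ ℂ be open, ε > 0, and K compact with {z : dist(z,K) ≤ ε} ⊆ U. If γ₀ and γ₁ are closed piecewise C¹ paths on [a,b] with image contained in K such that |γ₀(t) − γ₁(t)| ≤ ε/2 for all t ∈ [a,b], then ∮_{γ₀} f(z) dz = ∮_{γ₁} f(z) dz for every function f holomorphic on U. -/
open Set intervalIntegral

def PiecewiseC1On (γ : ℝ → ℂ) (a b : ℝ) : Prop :=
  ContinuousOn γ (Set.Icc a b) ∧ ∃ n : ℕ, ∃ p : ℕ → ℝ, 0 < n ∧ p 0 = a ∧ p n = b ∧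
    (∀ i < n, p i < p (i + 1)) ∧ ∀ i < n, ContDiffOn ℝ 1 γ (Set.Icc (p i) (p (i + 1)))

/-
Cut `[a, b]` into pieces so short that on each piece `γ₀` stays within `ε / 2` of its value `z ∈ K`
at the left end point. Both paths then stay in the disc `ball z ε ⊆ U`, on which `f` has a
primitive, so on that piece the two path integrals differ by the difference of the integrals of `f`
along the segments `[γ₁ t, γ₀ t]` at the two end points, a quantity in which the primitive no
longer appears. Summing over the pieces telescopes, and the first and last segments coincide
because both paths are closed.
-/

open Metric MeasureTheory

theorem integral_eq_sub_of_adjacent_intervals {E : Type*} [NormedAddCommGroup E]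
    [NormedSpace ℝ E] {g : ℝ → E} {m : ℕ → ℝ} {G : ℕ → E} {n : ℕ}
    (hint : ∀ k < n, IntervalIntegrable g volume (m k) (m (k + 1)))
    (hG : ∀ k < n, ∫ t in m k..m (k + 1), g t = G (k + 1) - G k) :
    ∫ t in m 0..m n, g t = G n - G 0 := by
  rw [← sum_integral_adjacent_intervals hint,
    Finset.sum_congr rfl fun k hk => hG k (Finset.mem_range.1 hk), Finset.sum_range_sub]

theorem exists_monotone_grid {a b δ : ℝ} (hab : a ≤ b) (hδ : 0 < δ) :
    ∃ N : ℕ, ∃ q : ℕ → ℝ, Monotone q ∧ q 0 = a ∧ q N = b ∧ ∀ k, q (k + 1) - q k < δ := by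
  obtain ⟨N, hN⟩ := exists_nat_gt ((b - a) / δ)
  have hN0 : (0 : ℝ) < N := (div_nonneg (sub_nonneg.2 hab) hδ.le).trans_lt hN
  refine ⟨N, fun k => a + k * ((b - a) / N), fun k l hkl => ?_, by simp, by field_simp; ring,
    fun k => ?_⟩
  · have : 0 ≤ (b - a) / N := div_nonneg (sub_nonneg.2 hab) hN0.le
    dsimp only
    gcongr
  · calc a + ((k + 1 : ℕ) : ℝ) * ((b - a) / N) - (a + k * ((b - a) / N)) = (b - a) / N := by
          push_cast; ring
      _ < δ := by rwa [div_lt_iff₀ hN0, mul_comm, ← div_lt_iff₀ hδ]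

theorem ContinuousOn.exists_partition_mapsTo_ball {X : Type*} [PseudoMetricSpace X]
    {γ : ℝ → X} {a b r : ℝ} (hγ : ContinuousOn γ (Icc a b)) (hab : a ≤ b) (hr : 0 < r) :
    ∃ N : ℕ, ∃ q : ℕ → ℝ, Monotone q ∧ q 0 = a ∧ q N = b ∧
      ∀ k < N, MapsTo γ (Icc (q k) (q (k + 1))) (ball (γ (q k)) r) := by
  obtain ⟨δ, hδ, hγδ⟩ := Metric.uniformContinuousOn_iff.1
    (isCompact_Icc.uniformContinuousOn_of_continuous hγ) r hr
  obtain ⟨N, q, hq, hq0, hqN, hmesh⟩ := exists_monotone_grid hab hδ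
  refine ⟨N, q, hq, hq0, hqN, fun k hk t ht => ?_⟩
  have hqk : q k ∈ Icc a b := ⟨hq0 ▸ hq k.zero_le, hqN ▸ hq hk.le⟩
  have ht' : t ∈ Icc a b := ⟨hqk.1.trans ht.1, ht.2.trans (hqN ▸ hq hk)⟩
  exact hγδ t ht' (q k) hqk
    (by rw [Real.dist_eq, abs_of_nonneg (sub_nonneg.2 ht.1)]; linarith [ht.2, hmesh k])

theorem Icc_max_min_subset_Icc {c d x y : ℝ} (h : max c (min d x) < max c (min d y)) :
    Icc (max c (min d x)) (max c (min d y)) ⊆ Icc x y := by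
  refine Icc_subset_Icc ?_ ?_ <;> grind

theorem PiecewiseC1On.exists_partition {γ : ℝ → ℂ} {a b c d : ℝ} (h : PiecewiseC1On γ a b)
    (hac : a ≤ c) (hcd : c ≤ d) (hdb : d ≤ b) :
    ∃ n : ℕ, ∃ m : ℕ → ℝ, m 0 = c ∧ m n = d ∧ ∀ i < n, m i ≤ m (i + 1) ∧
      Icc (m i) (m (i + 1)) ⊆ Icc c d ∧ ContDiffOn ℝ 1 γ (Icc (m i) (m (i + 1))) := by
  obtain ⟨-, n, p, -, hp0, hpn, hmono, hC1⟩ := h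
  refine ⟨n, fun i => max c (min d (p i)), by grind, by grind, fun i hi => ?_⟩
  have hle : max c (min d (p i)) ≤ max c (min d (p (i + 1))) :=
    max_le_max le_rfl (min_le_min le_rfl (hmono i hi).le)
  refine ⟨hle, Icc_subset_Icc (le_max_left _ _) (max_le hcd (min_le_left _ _)), ?_⟩
  rcases hle.eq_or_lt with heq | hlt
  · dsimp only
    rw [heq, Icc_self]
    exact contDiffOn_const.congr fun t ht => by rw [mem_singleton_iff.1 ht]
  · exact (hC1 i hi).mono (Icc_max_min_subset_Icc hlt)

theorem ContDiffOn.intervalIntegrable_mul_deriv {g γ : ℝ → ℂ} {c d : ℝ} (hcd : c ≤ d)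
    (hg : ContinuousOn g (Icc c d)) (hγ : ContDiffOn ℝ 1 γ (Icc c d)) :
    IntervalIntegrable (fun t => g t * deriv γ t) volume c d := by
  rcases hcd.eq_or_lt with rfl | hlt
  · exact IntervalIntegrable.refl
  have hcont : ContinuousOn (fun t => g t * derivWithin γ (Icc c d) t) (Icc c d) :=
    hg.mul (hγ.continuousOn_derivWithin (uniqueDiffOn_Icc hlt) le_rfl)
  -- `deriv γ` may be junk at `c` and `d`, but agrees with `derivWithin γ (Icc c d)` on `Ioo c d`.
  rw [intervalIntegrable_iff_integrableOn_Ioo_of_le hcd]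
  refine (hcont.integrableOn_Icc.mono_set Ioo_subset_Icc_self).congr_fun (fun t ht => ?_)
    measurableSet_Ioo
  simp only [derivWithin_of_mem_nhds (Icc_mem_nhds ht.1 ht.2)]

theorem ContDiffOn.integral_comp_mul_deriv {f F : ℂ → ℂ} {γ : ℝ → ℂ} {c d : ℝ} {s : Set ℂ}
    (hcd : c ≤ d) (hγ : ContDiffOn ℝ 1 γ (Icc c d)) (hfc : ContinuousOn f s)
    (hF : ∀ z ∈ s, HasDerivAt F (f z) z) (himg : MapsTo γ (Icc c d) s) :
    ∫ t in c..d, f (γ t) * deriv γ t = F (γ d) - F (γ c) := by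
  refine integral_eq_sub_of_hasDerivAt_of_le hcd
    (fun t ht => (hF _ (himg ht)).continuousAt.comp_continuousWithinAt (hγ.continuousOn t ht))
    (fun t ht => ?_) (hγ.intervalIntegrable_mul_deriv hcd (hfc.comp hγ.continuousOn himg))
  have hγt : HasDerivAt γ (deriv γ t) t :=
    ((hγ.differentiableOn one_ne_zero t (Ioo_subset_Icc_self ht)).differentiableAt
      (Icc_mem_nhds ht.1 ht.2)).hasDerivAt
  exact (hF _ (himg (Ioo_subset_Icc_self ht))).comp t hγt

theorem PiecewiseC1On.intervalIntegrable_mul_deriv {g γ : ℝ → ℂ} {a b c d : ℝ}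
    (h : PiecewiseC1On γ a b) (hac : a ≤ c) (hcd : c ≤ d) (hdb : d ≤ b)
    (hg : ContinuousOn g (Icc c d)) :
    IntervalIntegrable (fun t => g t * deriv γ t) volume c d := by
  obtain ⟨n, m, rfl, rfl, hm⟩ := h.exists_partition hac hcd hdb
  refine IntervalIntegrable.trans_iterate fun i hi => ?_
  obtain ⟨hle, hsub, hC1⟩ := hm i hi
  exact hC1.intervalIntegrable_mul_deriv hle (hg.mono hsub)

theorem PiecewiseC1On.integral_comp_mul_deriv {f F : ℂ → ℂ} {γ : ℝ → ℂ} {a b c d : ℝ}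
    {s : Set ℂ} (h : PiecewiseC1On γ a b) (hac : a ≤ c) (hcd : c ≤ d) (hdb : d ≤ b)
    (hfc : ContinuousOn f s) (hF : ∀ z ∈ s, HasDerivAt F (f z) z)
    (himg : MapsTo γ (Icc c d) s) :
    ∫ t in c..d, f (γ t) * deriv γ t = F (γ d) - F (γ c) := by
  obtain ⟨n, m, rfl, rfl, hm⟩ := h.exists_partition hac hcd hdb
  refine integral_eq_sub_of_adjacent_intervals (G := fun i => F (γ (m i)))
    (fun i hi => ?_) fun i hi => ?_
  · obtain ⟨hle, hsub, hC1⟩ := hm i hi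
    exact hC1.intervalIntegrable_mul_deriv hle (hfc.comp hC1.continuousOn (himg.mono_left hsub))
  · obtain ⟨hle, hsub, hC1⟩ := hm i hi
    exact hC1.integral_comp_mul_deriv hle hfc hF (himg.mono_left hsub)

noncomputable def segmentIntegral (f : ℂ → ℂ) (z w : ℂ) : ℂ :=
  (w - z) * ∫ t in (0 : ℝ)..1, f (z + t • (w - z))

theorem sub_eq_segmentIntegral {f F : ℂ → ℂ} {s : Set ℂ} (hfc : ContinuousOn f s)
    (hF : ∀ z ∈ s, HasDerivAt F (f z) z) {z w : ℂ} (hzw : segment ℝ z w ⊆ s) :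
    F w - F z = segmentIntegral f z w := by
  have hmem : ∀ t ∈ Icc (0 : ℝ) 1, z + t • (w - z) ∈ s := fun t ht =>
    hzw (by rw [segment_eq_image']; exact ⟨t, ht, rfl⟩)
  have := integral_unitInterval_deriv_eq_sub (f := F) (hfc.comp (by fun_prop) hmem)
    fun t ht => hF _ (hmem t ht)
  rw [add_sub_cancel] at this
  exact this.symm

theorem PiecewiseC1On.integral_sub_eq_segmentIntegral_sub {f : ℂ → ℂ} {s : Set ℂ}
    (hs : Convex ℝ s) (hfc : ContinuousOn f s) (hf : Complex.IsExactOn f s)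
    {γ₀ γ₁ : ℝ → ℂ} {a b c d : ℝ} (h₀ : PiecewiseC1On γ₀ a b) (h₁ : PiecewiseC1On γ₁ a b)
    (hac : a ≤ c) (hcd : c ≤ d) (hdb : d ≤ b)
    (himg₀ : MapsTo γ₀ (Icc c d) s) (himg₁ : MapsTo γ₁ (Icc c d) s) :
    ∫ t in c..d, f (γ₀ t) * deriv γ₀ t - f (γ₁ t) * deriv γ₁ t =
      segmentIntegral f (γ₁ d) (γ₀ d) - segmentIntegral f (γ₁ c) (γ₀ c) := by
  obtain ⟨F, hF⟩ := hf
  have hcd_ab : Icc c d ⊆ Icc a b := Icc_subset_Icc hac hdb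
  have hc : c ∈ Icc c d := left_mem_Icc.2 hcd
  have hd : d ∈ Icc c d := right_mem_Icc.2 hcd
  rw [integral_sub
      (h₀.intervalIntegrable_mul_deriv (g := fun t => f (γ₀ t)) hac hcd hdb
        (hfc.comp (h₀.1.mono hcd_ab) himg₀))
      (h₁.intervalIntegrable_mul_deriv (g := fun t => f (γ₁ t)) hac hcd hdb
        (hfc.comp (h₁.1.mono hcd_ab) himg₁)),
    h₀.integral_comp_mul_deriv hac hcd hdb hfc hF himg₀,
    h₁.integral_comp_mul_deriv hac hcd hdb hfc hF himg₁,
    ← sub_eq_segmentIntegral hfc hF (hs.segment_subset (himg₁ hd) (himg₀ hd)),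
    ← sub_eq_segmentIntegral hfc hF (hs.segment_subset (himg₁ hc) (himg₀ hc))]
  ring

theorem PiecewiseC1On.integral_sub_eq_segmentIntegral_sub_of_mapsTo_ball {f : ℂ → ℂ} {z : ℂ}
    {ε : ℝ} (hf : DifferentiableOn ℂ f (ball z ε)) {γ₀ γ₁ : ℝ → ℂ} {a b c d : ℝ}
    (h₀ : PiecewiseC1On γ₀ a b) (h₁ : PiecewiseC1On γ₁ a b)
    (hac : a ≤ c) (hcd : c ≤ d) (hdb : d ≤ b) (hnear : MapsTo γ₀ (Icc c d) (ball z (ε / 2)))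
    (hclose : ∀ t ∈ Icc c d, dist (γ₀ t) (γ₁ t) ≤ ε / 2) :
    ∫ t in c..d, f (γ₀ t) * deriv γ₀ t - f (γ₁ t) * deriv γ₁ t =
      segmentIntegral f (γ₁ d) (γ₀ d) - segmentIntegral f (γ₁ c) (γ₀ c) := by
  have hε : 0 ≤ ε := by
    linarith [dist_nonneg.trans_lt (mem_ball.1 (hnear (left_mem_Icc.2 hcd)))]
  refine h₀.integral_sub_eq_segmentIntegral_sub (convex_ball z ε) hf.continuousOn
    hf.isExactOn_ball h₁ hac hcd hdb (hnear.mono_right (ball_subset_ball (half_le_self hε)))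
    fun t ht => mem_ball.2 ?_
  calc dist (γ₁ t) z ≤ dist (γ₀ t) (γ₁ t) + dist (γ₀ t) z := dist_triangle_left _ _ _
    _ < ε := by linarith [hclose t ht, mem_ball.1 (hnear ht)]

theorem bishop_close_paths_general (U : Set ℂ) (ε : ℝ) (hε : 0 < ε)
    (K : Set ℂ) (hKU : {z : ℂ | Metric.infDist z K ≤ ε} ⊆ U)
    (a b : ℝ) (hab : a < b) (γ₀ γ₁ : ℝ → ℂ)
    (h₀ : PiecewiseC1On γ₀ a b) (h₁ : PiecewiseC1On γ₁ a b)
    (hc₀ : γ₀ a = γ₀ b) (hc₁ : γ₁ a = γ₁ b)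
    (hK₀ : ∀ t ∈ Icc a b, γ₀ t ∈ K) (hK₁ : ∀ t ∈ Icc a b, γ₁ t ∈ K)
    (hclose : ∀ t ∈ Icc a b, ‖γ₀ t - γ₁ t‖ ≤ ε / 2)
    (f : ℂ → ℂ) (hf : DifferentiableOn ℂ f U) :
    ∫ t in a..b, f (γ₀ t) * deriv γ₀ t = ∫ t in a..b, f (γ₁ t) * deriv γ₁ t := by
  obtain ⟨N, q, hq, hq0, hqN, hnear⟩ := h₀.1.exists_partition_mapsTo_ball hab.le (half_pos hε)
  have hqab : ∀ k ≤ N, q k ∈ Icc a b := fun k hk => ⟨hq0 ▸ hq k.zero_le, hqN ▸ hq hk⟩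
  have hfK : ContinuousOn f K := hf.continuousOn.mono fun z hz =>
    hKU (by simp [infDist_zero_of_mem hz, hε.le])
  have hint₀ : IntervalIntegrable (fun t => f (γ₀ t) * deriv γ₀ t) volume a b :=
    h₀.intervalIntegrable_mul_deriv le_rfl hab.le le_rfl (hfK.comp h₀.1 hK₀)
  have hint₁ : IntervalIntegrable (fun t => f (γ₁ t) * deriv γ₁ t) volume a b :=
    h₁.intervalIntegrable_mul_deriv le_rfl hab.le le_rfl (hfK.comp h₁.1 hK₁)
  have hstep : ∀ k < N, ∫ t in q k..q (k + 1), f (γ₀ t) * deriv γ₀ t - f (γ₁ t) * deriv γ₁ t =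
      segmentIntegral f (γ₁ (q (k + 1))) (γ₀ (q (k + 1))) -
        segmentIntegral f (γ₁ (q k)) (γ₀ (q k)) := by
    intro k hk
    have hpiece : Icc (q k) (q (k + 1)) ⊆ Icc a b :=
      Icc_subset_Icc (hqab k hk.le).1 (hqab (k + 1) hk).2
    have hball : ball (γ₀ (q k)) ε ⊆ U := fun w hw =>
      hKU ((infDist_le_dist_of_mem (hK₀ _ (hqab k hk.le))).trans (mem_ball.1 hw).le)
    exact h₀.integral_sub_eq_segmentIntegral_sub_of_mapsTo_ball (hf.mono hball) h₁
      (hqab k hk.le).1 (hq k.le_succ) (hqab (k + 1) hk).2 (hnear k hk)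
      fun t ht => (dist_eq_norm _ _).trans_le (hclose t (hpiece ht))
  have htelescope := integral_eq_sub_of_adjacent_intervals
    (G := fun k => segmentIntegral f (γ₁ (q k)) (γ₀ (q k)))
    (fun k hk => (hint₀.sub hint₁).mono_set <|
      uIcc_subset_uIcc (Icc_subset_uIcc (hqab k hk.le)) (Icc_subset_uIcc (hqab (k + 1) hk)))
    hstep
  rw [hq0, hqN, hc₀, hc₁, sub_self, integral_sub hint₀ hint₁] at htelescope
  exact sub_eq_zero.1 htelescope

theorem bishop_close_paths (U : Set ℂ) (hU : IsOpen U) (ε : ℝ) (hε : 0 < ε)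
    (K : Set ℂ) (hK : IsCompact K) (hKU : {z : ℂ | Metric.infDist z K ≤ ε} ⊆ U)
    (a b : ℝ) (hab : a < b) (γ₀ γ₁ : ℝ → ℂ)
    (h₀ : PiecewiseC1On γ₀ a b) (h₁ : PiecewiseC1On γ₁ a b)
    (hc₀ : γ₀ a = γ₀ b) (hc₁ : γ₁ a = γ₁ b)
    (hK₀ : ∀ t ∈ Icc a b, γ₀ t ∈ K) (hK₁ : ∀ t ∈ Icc a b, γ₁ t ∈ K)
    (hclose : ∀ t ∈ Icc a b, ‖γ₀ t - γ₁ t‖ ≤ ε / 2)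
    (f : ℂ → ℂ) (hf : DifferentiableOn ℂ f U) :
    ∫ t in a..b, f (γ₀ t) * deriv γ₀ t = ∫ t in a..b, f (γ₁ t) * deriv γ₁ t :=
  bishop_close_paths_general U ε hε K hKU a b hab γ₀ γ₁ h₀ h₁ hc₀ hc₁ hK₀ hK₁ hclose f hf
end

section
/- Let U ⊆ ℂ be open and let γ₀, γ₁ be two closed piecewise C¹ paths on [0,1] with images in U that are homotopic (as loops) in U in the sense of mathlib's Path.Homotopic relation restricted to U. Then for every holomorphic f on U, the contour integrals of f along γ₀ and γ₁ agree. -/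
/-!
Cover the compact image of the homotopy by discs of a common radius `r` inside `U`; on each
disc `f` has a primitive. Cut the square into an `N × N` grid fine enough that every cell is
mapped into such a disc. Evaluating local primitives at the images of the grid vertices
turns each row of the grid into a finite sum. Around a single cell the primitives involved
differ by constants, so consecutive rows give the same sum, the contributions of the two
vertical sides cancelling because every intermediate curve is closed. On the first and last
rows the fundamental theorem of calculus for piecewise `C¹` paths identifies these sums with
the two contour integrals.
-/

open Set intervalIntegral

open Metric MeasureTheory

theorem sub_eq_sub_of_forall_hasDerivAt {𝕜 G : Type*} [RCLike 𝕜]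
    [NormedAddCommGroup G] [NormedSpace 𝕜 G] {V : Set 𝕜} (hVo : IsOpen V) (hVc : IsPreconnected V)
    {f g₁ g₂ : 𝕜 → G} (h₁ : ∀ z ∈ V, HasDerivAt g₁ (f z) z) (h₂ : ∀ z ∈ V, HasDerivAt g₂ (f z) z)
    {a b : 𝕜} (ha : a ∈ V) (hb : b ∈ V) : g₁ b - g₁ a = g₂ b - g₂ a := by
  obtain ⟨c, hc⟩ := hVo.exists_eq_add_of_deriv_eq hVc
    (fun z hz => (h₁ z hz).differentiableAt.differentiableWithinAt)
    (fun z hz => (h₂ z hz).differentiableAt.differentiableWithinAt)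
    (fun z hz => (h₁ z hz).deriv.trans (h₂ z hz).deriv.symm)
  rw [hc ha, hc hb, add_sub_add_right_eq_sub]

theorem exists_mem_Icc_of_mem_Icc_zero_succ (p : ℕ → ℝ) {t : ℝ} :
    ∀ k, t ∈ Icc (p 0) (p (k + 1)) → ∃ i ≤ k, t ∈ Icc (p i) (p (i + 1))
  | 0, ht => ⟨0, le_rfl, ht⟩
  | k + 1, ht => by
    by_cases hk : p (k + 1) ≤ t
    · exact ⟨k + 1, le_rfl, hk, ht.2⟩
    · obtain ⟨i, hi, hti⟩ := exists_mem_Icc_of_mem_Icc_zero_succ p k ⟨ht.1, (not_le.1 hk).le⟩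
      exact ⟨i, hi.trans k.le_succ, hti⟩

namespace PiecewiseC1On

variable {γ : ℝ → ℂ} {a b : ℝ}

theorem exists_countable_differentiableAt (hγ : PiecewiseC1On γ a b) :
    ∃ s : Set ℝ, s.Countable ∧ ∀ t ∈ Ioo a b \ s, DifferentiableAt ℝ γ t := by
  obtain ⟨-, n, p, hn, hp0, hpn, -, hC1⟩ := hγ
  refine ⟨range p, countable_range p, fun t ⟨ht, htp⟩ => ?_⟩
  obtain ⟨k, rfl⟩ := Nat.exists_eq_add_one_of_ne_zero hn.ne'
  obtain ⟨i, hi, hti⟩ := exists_mem_Icc_of_mem_Icc_zero_succ p k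
    ⟨hp0 ▸ ht.1.le, hpn ▸ ht.2.le⟩
  have hti' : t ∈ Ioo (p i) (p (i + 1)) :=
    ⟨hti.1.lt_of_ne fun h => htp ⟨i, h⟩, hti.2.lt_of_ne fun h => htp ⟨i + 1, h.symm⟩⟩
  exact ((hC1 i (by omega)).differentiableOn one_ne_zero t hti).differentiableAt
    (Icc_mem_nhds hti'.1 hti'.2)

theorem intervalIntegrable_deriv (hγ : PiecewiseC1On γ a b) :
    IntervalIntegrable (deriv γ) volume a b := by
  obtain ⟨-, n, p, -, rfl, rfl, hlt, hC1⟩ := hγ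
  refine IntervalIntegrable.trans_iterate fun i hi => ?_
  have hcont : ContinuousOn (derivWithin γ (Icc (p i) (p (i + 1)))) (uIcc (p i) (p (i + 1))) := by
    rw [uIcc_of_le (hlt i hi).le]
    exact (hC1 i hi).continuousOn_derivWithin (uniqueDiffOn_Icc (hlt i hi)) le_rfl
  refine hcont.intervalIntegrable.congr_uIoo fun t ht => ?_
  rw [uIoo_of_le (hlt i hi).le] at ht
  exact derivWithin_of_mem_nhds (Icc_mem_nhds ht.1 ht.2)

theorem intervalIntegrable_mul_deriv_s11 (hγ : PiecewiseC1On γ a b) {u v : ℝ} (hau : a ≤ u)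
    (huv : u ≤ v) (hvb : v ≤ b) {φ : ℝ → ℂ} (hφ : ContinuousOn φ (Icc u v)) :
    IntervalIntegrable (fun t => φ t * deriv γ t) volume u v := by
  have hsub : uIcc u v ⊆ uIcc a b := by
    rw [uIcc_of_le huv, uIcc_of_le (hau.trans (huv.trans hvb))]
    exact Icc_subset_Icc hau hvb
  exact (hγ.intervalIntegrable_deriv.mono_set hsub).continuousOn_mul (uIcc_of_le huv ▸ hφ)

theorem integral_eq_sub_of_forall_hasDerivAt (hγ : PiecewiseC1On γ a b) {u v : ℝ} (hau : a ≤ u)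
    (huv : u ≤ v) (hvb : v ≤ b) {V : Set ℂ} (hV : IsOpen V) (hγV : ∀ t ∈ Icc u v, γ t ∈ V)
    {f g : ℂ → ℂ} (hg : ∀ z ∈ V, HasDerivAt g (f z) z) :
    ∫ t in u..v, f (γ t) * deriv γ t = g (γ v) - g (γ u) := by
  obtain ⟨s, hs, hγs⟩ := hγ.exists_countable_differentiableAt
  have hγc : ContinuousOn γ (Icc u v) := hγ.1.mono (Icc_subset_Icc hau hvb)
  have hfc : ContinuousOn f V := (Complex.IsExactOn.differentiableOn hV ⟨g, hg⟩).continuousOn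
  refine integral_eq_of_hasDerivAt_off_countable_of_le _ _ huv hs
    (fun t ht => (hg _ (hγV t ht)).continuousAt.comp_continuousWithinAt (hγc t ht))
    (fun t ht => (hg _ (hγV t (Ioo_subset_Icc_self ht.1))).comp t
      (hγs t ⟨⟨hau.trans_lt ht.1.1, ht.1.2.trans_le hvb⟩, ht.2⟩).hasDerivAt)
    (hγ.intervalIntegrable_mul_deriv_s11 hau huv hvb (hfc.comp hγc hγV))

theorem integral_eq_sum_of_forall_hasDerivAt (hγ : PiecewiseC1On γ a b) {N : ℕ} {s : ℕ → ℝ}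
    (hs : Monotone s) (hs0 : s 0 = a) (hsN : s N = b) {V : ℕ → Set ℂ} (hV : ∀ i, IsOpen (V i))
    (hγV : ∀ i < N, ∀ t ∈ Icc (s i) (s (i + 1)), γ t ∈ V i) {f : ℂ → ℂ} {g : ℕ → ℂ → ℂ}
    (hg : ∀ i < N, ∀ z ∈ V i, HasDerivAt (g i) (f z) z) :
    ∫ t in a..b, f (γ t) * deriv γ t =
      ∑ i ∈ Finset.range N, (g i (γ (s (i + 1))) - g i (γ (s i))) := by
  have hbounds : ∀ i < N, a ≤ s i ∧ s i ≤ s (i + 1) ∧ s (i + 1) ≤ b := fun i hi =>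
    ⟨hs0 ▸ hs i.zero_le, hs i.le_succ, hsN ▸ hs hi⟩
  rw [← hs0, ← hsN, ← sum_integral_adjacent_intervals fun i hi => ?_]
  · refine Finset.sum_congr rfl fun i hi => ?_
    obtain ⟨h₁, h₂, h₃⟩ := hbounds i (Finset.mem_range.1 hi)
    exact hγ.integral_eq_sub_of_forall_hasDerivAt h₁ h₂ h₃ (hV i) (hγV i (Finset.mem_range.1 hi))
      (hg i (Finset.mem_range.1 hi))
  · obtain ⟨h₁, h₂, h₃⟩ := hbounds i hi
    have hfc := (Complex.IsExactOn.differentiableOn (hV i) ⟨g i, hg i hi⟩).continuousOn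
    exact hγ.intervalIntegrable_mul_deriv_s11 h₁ h₂ h₃
      (hfc.comp (hγ.1.mono (Icc_subset_Icc h₁ h₃)) (hγV i hi))

end PiecewiseC1On

/-- Discrete Stokes theorem on a cylinder: `h j i` and `v j i` are increments along the edges
from `(j, i)` to `(j, i + 1)` and to `(j + 1, i)`, the second coordinate being periodic. -/
theorem Finset.sum_range_eq_of_cell_eq {G : Type*} [AddCommGroup G] {M N : ℕ} (h v : ℕ → ℕ → G)
    (hcell : ∀ j < M, ∀ i < N, h j i + v j (i + 1) = v j i + h (j + 1) i)
    (hper : ∀ j < M, v j N = v j 0) :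
    ∑ i ∈ Finset.range N, h 0 i = ∑ i ∈ Finset.range N, h M i := by
  induction M with
  | zero => rfl
  | succ M ih =>
    rw [ih (fun j hj => hcell j (by omega)) (fun j hj => hper j (by omega)), ← sub_eq_zero,
      ← Finset.sum_sub_distrib]
    calc ∑ i ∈ Finset.range N, (h M i - h (M + 1) i)
        = ∑ i ∈ Finset.range N, (v M i - v M (i + 1)) := Finset.sum_congr rfl fun i hi => by
          rw [sub_eq_sub_iff_add_eq_add, hcell M M.lt_succ_self i (Finset.mem_range.1 hi), add_comm]
      _ = 0 := by rw [Finset.sum_range_sub', hper M M.lt_succ_self, sub_self]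

theorem IsCompact.exists_nat_forall_dist_lt {α β : Type*} [PseudoMetricSpace α]
    [PseudoMetricSpace β] {S : Set α} {H : α → β} (hS : IsCompact S) (hH : ContinuousOn H S)
    {r : ℝ} (hr : 0 < r) :
    ∃ N : ℕ, 0 < N ∧ ∀ p ∈ S, ∀ q ∈ S, dist p q ≤ 1 / N → dist (H p) (H q) < r := by
  obtain ⟨δ, hδ, hHδ⟩ :=
    Metric.uniformContinuousOn_iff.1 (hS.uniformContinuousOn_of_continuous hH) r hr
  obtain ⟨N, hN⟩ := exists_nat_one_div_lt hδ
  refine ⟨N + 1, N.succ_pos, fun p hp q hq hpq => hHδ p hp q hq (hpq.trans_lt ?_)⟩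
  exact_mod_cast hN

theorem natCast_div_mem_Icc {i N : ℕ} (hi : i ≤ N) : (i / N : ℝ) ∈ Icc 0 1 :=
  ⟨by positivity, div_le_one_of_le₀ (Nat.cast_le.2 hi) N.cast_nonneg⟩

theorem dist_natCast_div_le {j m n : ℕ} (N : ℕ) (hm : m ∈ Icc j (j + 1)) (hn : n ∈ Icc j (j + 1)) :
    dist (m / N : ℝ) (n / N) ≤ 1 / N := by
  obtain ⟨hm₁, hm₂⟩ := hm
  obtain ⟨hn₁, hn₂⟩ := hn
  rw [Real.dist_eq, ← sub_div, abs_div, Nat.abs_cast]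
  refine div_le_div_of_nonneg_right (abs_sub_le_iff.2 ⟨?_, ?_⟩) N.cast_nonneg <;>
    rw [sub_le_iff_le_add] <;> exact_mod_cast (by omega)

/-- `P c z` plays the role of `∫_c^z f` for `z` near `c ∈ K`. -/
def IsPrimitiveFamily (f : ℂ → ℂ) (K : Set ℂ) (r : ℝ) (P : ℂ → ℂ → ℂ) : Prop :=
  ∀ c ∈ K, P c c = 0 ∧ ∀ z ∈ ball c r, HasDerivAt (P c) (f z) z

theorem exists_isPrimitiveFamily {f : ℂ → ℂ} {U K : Set ℂ} (hK : IsCompact K) (hU : IsOpen U)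
    (hKU : K ⊆ U) (hf : DifferentiableOn ℂ f U) : ∃ r > 0, ∃ P, IsPrimitiveFamily f K r P := by
  obtain ⟨r, hr, hrU⟩ := hK.exists_thickening_subset_open hU hKU
  have hprim : ∀ c ∈ K, ∃ g : ℂ → ℂ, g c = 0 ∧ ∀ z ∈ ball c r, HasDerivAt g (f z) z := fun c hc =>
    (hf.mono ((ball_subset_thickening hc r).trans hrU)).isExactOn_ball.with_val_at c 0
  choose! P hP using hprim
  exact ⟨r, hr, P, hP⟩

namespace IsPrimitiveFamily

variable {f : ℂ → ℂ} {K : Set ℂ} {r : ℝ} {P : ℂ → ℂ → ℂ}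

theorem apply_eq_sub (hP : IsPrimitiveFamily f K r P) {a b c : ℂ} (ha : a ∈ K) (hc : c ∈ K)
    (hac : a ∈ ball c r) (hbc : b ∈ ball c r) (hba : b ∈ ball a r) : P a b = P c b - P c a := by
  have hpos : 0 < r := pos_of_mem_ball hac
  have h := sub_eq_sub_of_forall_hasDerivAt (isOpen_ball.inter isOpen_ball)
    ((convex_ball a r).inter (convex_ball c r)).isPreconnected
    (fun z hz => (hP a ha).2 z hz.1) (fun z hz => (hP c hc).2 z hz.2)
    ⟨mem_ball_self hpos, hac⟩ ⟨hba, hbc⟩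
  rwa [(hP a ha).1, sub_zero] at h

theorem sum_row_eq (hP : IsPrimitiveFamily f K r P) {M N : ℕ} {w : ℕ × ℕ → ℂ}
    (hwK : ∀ p ≤ (M, N), w p ∈ K)
    (hcell : ∀ j < M, ∀ i < N, ∀ p ∈ Icc (j, i) (j + 1, i + 1), ∀ q ∈ Icc (j, i) (j + 1, i + 1),
      dist (w p) (w q) < r)
    (hper : ∀ j ≤ M, w (j, N) = w (j, 0)) :
    ∑ i ∈ Finset.range N, P (w (0, i)) (w (0, i + 1)) =
      ∑ i ∈ Finset.range N, P (w (M, i)) (w (M, i + 1)) := by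
  refine Finset.sum_range_eq_of_cell_eq (fun j i => P (w (j, i)) (w (j, i + 1)))
    (fun j i => P (w (j, i)) (w (j + 1, i))) (fun j hj i hi => ?_)
    (fun j hj => by simp only [hper j hj.le, hper (j + 1) hj])
  have hK : ∀ p ∈ Icc (j, i) (j + 1, i + 1), w p ∈ K := fun p hp =>
    hwK p (hp.2.trans (Prod.mk_le_mk.2 ⟨hj, hi⟩))
  have hball : ∀ p ∈ Icc (j, i) (j + 1, i + 1), ∀ q ∈ Icc (j, i) (j + 1, i + 1),
      w p ∈ ball (w q) r := fun p hp q hq => mem_ball.2 (hcell j hj i hi p hp q hq)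
  have h00 : (j, i) ∈ Icc (j, i) (j + 1, i + 1) := by simp [Prod.mk_le_mk]
  have h01 : (j, i + 1) ∈ Icc (j, i) (j + 1, i + 1) := by simp [Prod.mk_le_mk]
  have h10 : (j + 1, i) ∈ Icc (j, i) (j + 1, i + 1) := by simp [Prod.mk_le_mk]
  have h11 : (j + 1, i + 1) ∈ Icc (j, i) (j + 1, i + 1) := by simp [Prod.mk_le_mk]
  rw [hP.apply_eq_sub (hK _ h01) (hK _ h00) (hball _ h01 _ h00) (hball _ h11 _ h00)
      (hball _ h11 _ h01),
    hP.apply_eq_sub (hK _ h10) (hK _ h00) (hball _ h10 _ h00) (hball _ h11 _ h00)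
      (hball _ h11 _ h10)]
  ring

theorem integral_eq_sum (hP : IsPrimitiveFamily f K r P) {γ : ℝ → ℂ} {a b : ℝ}
    (hγ : PiecewiseC1On γ a b) {N : ℕ} {s : ℕ → ℝ} (hs : Monotone s) (hs0 : s 0 = a)
    (hsN : s N = b) (hK : ∀ i < N, γ (s i) ∈ K)
    (hclose : ∀ i < N, ∀ t ∈ Icc (s i) (s (i + 1)), dist (γ t) (γ (s i)) < r) :
    ∫ t in a..b, f (γ t) * deriv γ t = ∑ i ∈ Finset.range N, P (γ (s i)) (γ (s (i + 1))) := by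
  rw [hγ.integral_eq_sum_of_forall_hasDerivAt hs hs0 hsN (fun _ => isOpen_ball) hclose
    fun i hi => (hP _ (hK i hi)).2]
  refine Finset.sum_congr rfl fun i hi => ?_
  rw [(hP _ (hK i (Finset.mem_range.1 hi))).1, sub_zero]

variable {H : ℝ × ℝ → ℂ} {N : ℕ}

theorem integral_eq_sum_row (hP : IsPrimitiveFamily f (H '' Icc 0 1 ×ˢ Icc 0 1) r P)
    (hN : 0 < N)
    (hclose : ∀ p ∈ Icc (0 : ℝ) 1 ×ˢ Icc (0 : ℝ) 1, ∀ q ∈ Icc (0 : ℝ) 1 ×ˢ Icc (0 : ℝ) 1,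
      dist p q ≤ 1 / N → dist (H p) (H q) < r)
    {x : ℝ} (hx : x ∈ Icc 0 1) {γ : ℝ → ℂ} (hγ : PiecewiseC1On γ 0 1)
    (hHγ : ∀ t ∈ Icc 0 1, H (x, t) = γ t) :
    ∫ t in (0 : ℝ)..1, f (γ t) * deriv γ t =
      ∑ i ∈ Finset.range N, P (H (x, i / N)) (H (x, (i + 1 : ℕ) / N)) := by
  have hsub : ∀ i < N, Icc ((i : ℝ) / N) ((i + 1 : ℕ) / N) ⊆ Icc 0 1 := fun i hi =>
    Icc_subset_Icc (natCast_div_mem_Icc hi.le).1 (natCast_div_mem_Icc hi).2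
  rw [hP.integral_eq_sum hγ (s := fun i => (i : ℝ) / N)
    (fun i j hij => div_le_div_of_nonneg_right (Nat.cast_le.2 hij) N.cast_nonneg) (by simp)
    (div_self (by positivity)) (fun i hi => ?_) (fun i hi t ht => ?_)]
  · refine Finset.sum_congr rfl fun i hi => ?_
    rw [hHγ _ (natCast_div_mem_Icc (Finset.mem_range.1 hi).le),
      hHγ _ (natCast_div_mem_Icc (Finset.mem_range.1 hi))]
  · rw [← hHγ _ (natCast_div_mem_Icc hi.le)]
    exact mem_image_of_mem H ⟨hx, natCast_div_mem_Icc hi.le⟩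
  · rw [← hHγ t (hsub i hi ht), ← hHγ _ (natCast_div_mem_Icc hi.le)]
    refine hclose _ ⟨hx, hsub i hi ht⟩ _ ⟨hx, natCast_div_mem_Icc hi.le⟩ ?_
    rw [Prod.dist_eq, dist_self, Real.dist_eq, abs_of_nonneg (sub_nonneg.2 ht.1)]
    refine max_le (by positivity) ?_
    calc t - i / N ≤ (i + 1 : ℕ) / N - i / N := sub_le_sub_right ht.2 _
      _ = 1 / N := by push_cast; ring

theorem sum_row_eq_of_homotopy (hP : IsPrimitiveFamily f (H '' Icc 0 1 ×ˢ Icc 0 1) r P)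
    (hN : 0 < N)
    (hclose : ∀ p ∈ Icc (0 : ℝ) 1 ×ˢ Icc (0 : ℝ) 1, ∀ q ∈ Icc (0 : ℝ) 1 ×ˢ Icc (0 : ℝ) 1,
      dist p q ≤ 1 / N → dist (H p) (H q) < r)
    (hHc : ∀ t ∈ Icc (0 : ℝ) 1, H (t, 0) = H (t, 1)) :
    ∑ i ∈ Finset.range N, P (H (0, i / N)) (H (0, (i + 1 : ℕ) / N)) =
      ∑ i ∈ Finset.range N, P (H (1, i / N)) (H (1, (i + 1 : ℕ) / N)) := by
  have hNN : (N : ℝ) / N = 1 := div_self (by positivity)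
  have hmem : ∀ p ≤ (N, N), ((p.1 : ℝ) / N, (p.2 : ℝ) / N) ∈ Icc (0 : ℝ) 1 ×ˢ Icc (0 : ℝ) 1 :=
    fun p hp => ⟨natCast_div_mem_Icc hp.1, natCast_div_mem_Icc hp.2⟩
  have h := hP.sum_row_eq (M := N) (N := N) (w := fun p => H (p.1 / N, p.2 / N))
    (fun p hp => mem_image_of_mem H (hmem p hp))
    (fun j hj i hi p hp q hq => hclose _ (hmem p (hp.2.trans (Prod.mk_le_mk.2 ⟨hj, hi⟩))) _
      (hmem q (hq.2.trans (Prod.mk_le_mk.2 ⟨hj, hi⟩)))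
      (max_le (dist_natCast_div_le N ⟨hp.1.1, hp.2.1⟩ ⟨hq.1.1, hq.2.1⟩)
        (dist_natCast_div_le N ⟨hp.1.2, hp.2.2⟩ ⟨hq.1.2, hq.2.2⟩)))
    (fun j hj => by simp [hNN, hHc _ (natCast_div_mem_Icc hj)])
  simpa [hNN] using h

end IsPrimitiveFamily

theorem cauchy_loop_homotopic_general (U : Set ℂ) (hU : IsOpen U)
    (γ₀ γ₁ : ℝ → ℂ)
    (h₀ : PiecewiseC1On γ₀ 0 1) (h₁ : PiecewiseC1On γ₁ 0 1)
    (H : ℝ × ℝ → ℂ) (hH : ContinuousOn H (Icc 0 1 ×ˢ Icc 0 1))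
    (hHU : ∀ p ∈ Icc (0:ℝ) 1 ×ˢ Icc (0:ℝ) 1, H p ∈ U)
    (hH0 : ∀ x ∈ Icc (0:ℝ) 1, H (0, x) = γ₀ x)
    (hH1 : ∀ x ∈ Icc (0:ℝ) 1, H (1, x) = γ₁ x)
    (hHc : ∀ t ∈ Icc (0:ℝ) 1, H (t, 0) = H (t, 1))
    (f : ℂ → ℂ) (hf : DifferentiableOn ℂ f U) :
    ∫ t in (0:ℝ)..1, f (γ₀ t) * deriv γ₀ t = ∫ t in (0:ℝ)..1, f (γ₁ t) * deriv γ₁ t := by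
  have hsq : IsCompact (Icc (0 : ℝ) 1 ×ˢ Icc (0 : ℝ) 1) := isCompact_Icc.prod isCompact_Icc
  obtain ⟨r, hr, P, hP⟩ := exists_isPrimitiveFamily (hsq.image_of_continuousOn hH) hU
    (image_subset_iff.2 hHU) hf
  obtain ⟨N, hN, hclose⟩ := hsq.exists_nat_forall_dist_lt hH hr
  rw [hP.integral_eq_sum_row hN hclose (left_mem_Icc.2 zero_le_one) h₀ hH0,
    hP.integral_eq_sum_row hN hclose (right_mem_Icc.2 zero_le_one) h₁ hH1]
  exact hP.sum_row_eq_of_homotopy hN hclose hHc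

theorem cauchy_loop_homotopic (U : Set ℂ) (hU : IsOpen U)
    (γ₀ γ₁ : ℝ → ℂ)
    (h₀ : PiecewiseC1On γ₀ 0 1) (h₁ : PiecewiseC1On γ₁ 0 1)
    (hc₀ : γ₀ 0 = γ₀ 1) (hc₁ : γ₁ 0 = γ₁ 1)
    (hU₀ : ∀ t ∈ Icc (0:ℝ) 1, γ₀ t ∈ U) (hU₁ : ∀ t ∈ Icc (0:ℝ) 1, γ₁ t ∈ U)
    (H : ℝ × ℝ → ℂ) (hH : ContinuousOn H (Icc 0 1 ×ˢ Icc 0 1))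
    (hHU : ∀ p ∈ Icc (0:ℝ) 1 ×ˢ Icc (0:ℝ) 1, H p ∈ U)
    (hH0 : ∀ x ∈ Icc (0:ℝ) 1, H (0, x) = γ₀ x)
    (hH1 : ∀ x ∈ Icc (0:ℝ) 1, H (1, x) = γ₁ x)
    (hHc : ∀ t ∈ Icc (0:ℝ) 1, H (t, 0) = H (t, 1))
    (f : ℂ → ℂ) (hf : DifferentiableOn ℂ f U) :
    ∫ t in (0:ℝ)..1, f (γ₀ t) * deriv γ₀ t = ∫ t in (0:ℝ)..1, f (γ₁ t) * deriv γ₁ t :=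
  cauchy_loop_homotopic_general U hU γ₀ γ₁ h₀ h₁ H hH hHU hH0 hH1 hHc f hf
end
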